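/- Let α ∈ (0,2) and define a_n^{(α)} = (1/(2π)) ∫_{−π}^{π} e^{−i n η} (4 sin²(η/2))^{α/2} dη for n ∈ ℤ. Then a_0^{(α)} > 0, a_n^{(α)} = a_{−n}^{(α)} for all n, and a_n^{(α)} < 0 for every n ≠ 0. -/

import Mathlib

/-!
Since `4 sin²(η/2) = 4 (1 - cos²(η/2))`, the binomial series `(1 - x)^β = ∑ c_k x^k`
(`β = α/2`) expands the symbol in powers of `cos²(η/2)`. For `0 < β < 1` one has `c_0 = 1`
and `c_k < 0` for `k ≥ 1`, and the partial sums of `c_k` stay nonnegative, so `∑ |c_k| ≤ 2`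
and the series may be integrated term by term. As the `n`-th Fourier coefficient of
`cos^{2k}(η/2)` is `4^{-k} binom(2k, k + |n|)`, this gives
`a_n = 4^β ∑_k c_k 4^{-k} binom(2k, k + |n|)`. For `n ≠ 0` the term `k = 0` vanishes, all
others are `≤ 0`, and the one with `k = |n|` is `< 0`. Symmetry is the substitution `η ↦ -η`, and
`a_0` is the mean of a continuous nonnegative function that is not identically zero.
-/

open MeasureTheory Real

noncomputable section

/-- The finite difference weight `a_n^{(α)} = (1/(2π)) ∫_{-π}^{π} e^{-inη} (4 sin²(η/2))^{α/2} dη`. -/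
def aWeightC (α : ℝ) (n : ℤ) : ℂ :=
  (1 / (2 * Real.pi)) • ∫ η in (-Real.pi)..Real.pi,
    Complex.exp (-Complex.I * (n : ℂ) * (η : ℂ)) *
      (((4 * Real.sin (η / 2) ^ 2) ^ (α / 2) : ℝ) : ℂ)

open Complex (I)
open scoped Complex

def oneSubRpowCoeff (β : ℝ) (k : ℕ) : ℝ := (-1) ^ k * Ring.choose β k

lemma oneSubRpowCoeff_zero (β : ℝ) : oneSubRpowCoeff β 0 = 1 := by
  simp [oneSubRpowCoeff]

lemma succ_mul_oneSubRpowCoeff_succ (β : ℝ) (k : ℕ) :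
    (k + 1) * oneSubRpowCoeff β (k + 1) = (k - β) * oneSubRpowCoeff β k := by
  have h := Ring.choose_smul_choose β (Nat.le_succ k)
  rw [Nat.choose_succ_self_right, nsmul_eq_mul, show k.succ - k = 1 by omega,
    Ring.choose_one_right] at h
  simp only [oneSubRpowCoeff, pow_succ]
  push_cast at h
  linear_combination -(-1 : ℝ) ^ k * h

lemma hasSum_oneSubRpowCoeff_mul_pow (β : ℝ) {x : ℝ} (hx : |x| < 1) :
    HasSum (fun k ↦ oneSubRpowCoeff β k * x ^ k) ((1 - x) ^ β) := by
  have h := Real.one_add_rpow_hasFPowerSeriesOnBall_zero (a := β).hasSum (y := -x)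
    (by simpa [Real.enorm_eq_ofReal_abs] using hx)
  simp only [binomialSeries_apply, List.ofFn_const, List.prod_replicate, smul_eq_mul,
    zero_add] at h
  rw [← sub_eq_add_neg] at h
  refine h.congr_fun fun k ↦ ?_
  rw [oneSubRpowCoeff, neg_pow x]
  ring

lemma oneSubRpowCoeff_succ_neg {β : ℝ} (hβ0 : 0 < β) (hβ1 : β < 1) (k : ℕ) :
    oneSubRpowCoeff β (k + 1) < 0 := by
  induction k with
  | zero => simpa [oneSubRpowCoeff] using hβ0
  | succ k ih =>
    have h := succ_mul_oneSubRpowCoeff_succ β (k + 1)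
    push_cast at h
    have hk : (0 : ℝ) < k + 1 - β := by linarith [(k.cast_nonneg : (0 : ℝ) ≤ k)]
    nlinarith [mul_neg_of_pos_of_neg hk ih]

lemma mul_sum_range_oneSubRpowCoeff (β : ℝ) (N : ℕ) :
    β * ∑ k ∈ Finset.range N, oneSubRpowCoeff β k = -(N * oneSubRpowCoeff β N) := by
  induction N with
  | zero => simp
  | succ N ih =>
    rw [Finset.sum_range_succ, mul_add, ih]
    push_cast
    linear_combination succ_mul_oneSubRpowCoeff_succ β N

lemma sum_range_abs_oneSubRpowCoeff_le {β : ℝ} (hβ0 : 0 < β) (hβ1 : β < 1) (N : ℕ) :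
    ∑ k ∈ Finset.range N, |oneSubRpowCoeff β k| ≤ 2 := by
  rcases N with _ | M
  · simp
  have hpos : 0 ≤ ∑ k ∈ Finset.range (M + 1), oneSubRpowCoeff β k := by
    have h := mul_sum_range_oneSubRpowCoeff β (M + 1)
    have := oneSubRpowCoeff_succ_neg hβ0 hβ1 M
    push_cast at h
    nlinarith
  have habs : ∀ k, |oneSubRpowCoeff β (k + 1)| = -oneSubRpowCoeff β (k + 1) :=
    fun k ↦ abs_of_neg (oneSubRpowCoeff_succ_neg hβ0 hβ1 k)
  rw [Finset.sum_range_succ'] at hpos ⊢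
  simp only [habs, Finset.sum_neg_distrib, oneSubRpowCoeff_zero, abs_one] at hpos ⊢
  linarith

lemma summable_abs_oneSubRpowCoeff {β : ℝ} (hβ0 : 0 < β) (hβ1 : β < 1) :
    Summable fun k ↦ |oneSubRpowCoeff β k| :=
  summable_of_sum_range_le (fun _ ↦ abs_nonneg _) (sum_range_abs_oneSubRpowCoeff_le hβ0 hβ1)

lemma ofReal_cos_half_sq (η : ℝ) :
    ((Real.cos (η / 2) ^ 2 : ℝ) : ℂ) =
      4⁻¹ * (cexp (η * I))⁻¹ * (cexp (η * I) + 1) ^ 2 := by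
  have hz : cexp (η * I) ≠ 0 := Complex.exp_ne_zero _
  have hcos : 2 * Complex.cos η = cexp (η * I) + (cexp (η * I))⁻¹ := by
    rw [Complex.two_cos, ← Complex.exp_neg, neg_mul]
  have hrhs : 4⁻¹ * (cexp (η * I))⁻¹ * (cexp (η * I) + 1) ^ 2
      = (2 + (cexp (η * I) + (cexp (η * I))⁻¹)) / 4 := by
    field_simp; ring
  rw [hrhs, ← hcos, Real.cos_sq, show 2 * (η / 2) = η by ring]
  push_cast
  ring

lemma ofReal_cos_half_sq_pow (k : ℕ) (η : ℝ) :
    ((Real.cos (η / 2) ^ 2 : ℝ) : ℂ) ^ k =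
      4⁻¹ ^ k * ∑ j ∈ Finset.range (2 * k + 1),
        (2 * k).choose j * cexp (I * ((j - k : ℤ) : ℂ) * η) := by
  have hz : cexp (η * I) ≠ 0 := Complex.exp_ne_zero _
  have hexp : ∀ m : ℤ, cexp (I * (m : ℂ) * η) = cexp (η * I) ^ m := fun m ↦ by
    rw [← Complex.exp_int_mul]; ring_nf
  rw [ofReal_cos_half_sq, mul_pow, mul_pow, ← pow_mul, add_pow, mul_assoc, Finset.mul_sum]
  congr 1
  refine Finset.sum_congr rfl fun j _ ↦ ?_
  rw [hexp, zpow_sub₀ hz, zpow_natCast, zpow_natCast, inv_pow]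
  ring

lemma integral_exp_I_int_mul (m : ℤ) :
    ∫ η in -π..π, cexp (I * m * η) = if m = 0 then ((2 * π : ℝ) : ℂ) else 0 := by
  split_ifs with hm
  · simp only [hm, Int.cast_zero, mul_zero, zero_mul, Complex.exp_zero,
      intervalIntegral.integral_const, sub_neg_eq_add, Complex.real_smul, mul_one]
    push_cast
    ring
  have hc : I * m ≠ 0 := mul_ne_zero Complex.I_ne_zero (Int.cast_ne_zero.mpr hm)
  rw [integral_exp_mul_complex hc]
  have hper : cexp (I * m * π) = cexp (I * m * (-π : ℝ)) :=
    Complex.exp_eq_exp_iff_exists_int.mpr ⟨m, by push_cast; ring⟩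
  rw [hper, sub_self, zero_div]

lemma integral_exp_mul_neg_int_of_even {g : ℝ → ℂ} (hg : ∀ η, g (-η) = g η) (n : ℤ) :
    ∫ η in -π..π, cexp (-I * ((-n : ℤ) : ℂ) * η) * g η =
      ∫ η in -π..π, cexp (-I * (n : ℂ) * η) * g η := by
  conv_rhs => rw [← neg_neg π, ← intervalIntegral.integral_comp_neg, neg_neg]
  simp only [hg, Int.cast_neg, Complex.ofReal_neg]
  ring_nf

lemma integral_exp_mul_cos_half_sq_pow (n : ℤ) (k : ℕ) :
    ∫ η in -π..π, cexp (-I * n * η) * ((Real.cos (η / 2) ^ 2 : ℝ) : ℂ) ^ k =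
      ((2 * π * 4⁻¹ ^ k * (2 * k).choose (k + n.natAbs) : ℝ) : ℂ) := by
  suffices h : ∀ m : ℕ,
      ∫ η in -π..π, cexp (-I * m * η) * ((Real.cos (η / 2) ^ 2 : ℝ) : ℂ) ^ k =
      ((2 * π * 4⁻¹ ^ k * (2 * k).choose (k + m) : ℝ) : ℂ) by
    obtain ⟨m, rfl | rfl⟩ := Int.eq_nat_or_neg n
    · exact_mod_cast h m
    · rw [integral_exp_mul_neg_int_of_even (fun η ↦ by rw [neg_div, Real.cos_neg])]
      simpa only [Int.natAbs_neg, Int.natAbs_natCast, Int.cast_natCast] using h m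
  intro m
  have hterm : ∀ η : ℝ, cexp (-I * m * η) * ((Real.cos (η / 2) ^ 2 : ℝ) : ℂ) ^ k =
      ∑ j ∈ Finset.range (2 * k + 1),
        4⁻¹ ^ k * (2 * k).choose j * cexp (I * ((j - k - m : ℤ) : ℂ) * η) := fun η ↦ by
    rw [ofReal_cos_half_sq_pow, Finset.mul_sum, Finset.mul_sum]
    refine Finset.sum_congr rfl fun j _ ↦ ?_
    rw [show I * ((j - k - m : ℤ) : ℂ) * η = -I * m * η + I * ((j - k : ℤ) : ℂ) * η by
      push_cast; ring, Complex.exp_add]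
    ring
  simp_rw [hterm]
  rw [intervalIntegral.integral_finsetSum fun j _ ↦
    (by fun_prop : Continuous _).intervalIntegrable _ _]
  simp_rw [intervalIntegral.integral_const_mul, integral_exp_I_int_mul, mul_ite, mul_zero,
    show ∀ j : ℕ, ((j : ℤ) - k - m = 0) ↔ (j = k + m) from fun j ↦ by omega]
  rw [Finset.sum_ite_eq']
  split_ifs with hmem
  · push_cast; ring
  · rw [Nat.choose_eq_zero_of_lt (by rw [Finset.mem_range] at hmem; omega)]
    simp

lemma hasSum_rpow_four_mul_sin_half_sq (β : ℝ) {η : ℝ} (hη : Real.sin (η / 2) ≠ 0) :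
    HasSum (fun k ↦ 4 ^ β * oneSubRpowCoeff β k * (Real.cos (η / 2) ^ 2) ^ k)
      ((4 * Real.sin (η / 2) ^ 2) ^ β) := by
  have hsin : 0 < Real.sin (η / 2) ^ 2 := by positivity
  have hcos : |Real.cos (η / 2) ^ 2| < 1 := by
    rw [abs_of_nonneg (sq_nonneg _)]
    linarith [Real.sin_sq_add_cos_sq (η / 2)]
  rw [Real.mul_rpow (by norm_num) hsin.le, Real.sin_sq]
  simpa only [mul_assoc] using (hasSum_oneSubRpowCoeff_mul_pow β hcos).mul_left (4 ^ β)

lemma sin_half_ne_zero {η : ℝ} (hη : η ∈ Set.Ioc (-π) π) (hη0 : η ≠ 0) :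
    Real.sin (η / 2) ≠ 0 := by
  rw [Ne, Real.sin_eq_zero_iff_of_lt_of_lt (by linarith [hη.1, pi_pos])
    (by linarith [hη.2, pi_pos])]
  exact div_ne_zero hη0 two_ne_zero

theorem hasSum_aWeightC {α : ℝ} (hα0 : 0 < α) (hα2 : α < 2) (n : ℤ) :
    HasSum (fun k ↦ ((4 ^ (α / 2) * oneSubRpowCoeff (α / 2) k * 4⁻¹ ^ k *
      (2 * k).choose (k + n.natAbs) : ℝ) : ℂ)) (aWeightC α n) := by
  set β := α / 2 with hβ
  set F : ℕ → ℝ → ℂ := fun k η ↦ ((4 ^ β * oneSubRpowCoeff β k : ℝ) : ℂ) *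
    (cexp (-I * n * η) * ((Real.cos (η / 2) ^ 2 : ℝ) : ℂ) ^ k)
  have hF_cont : ∀ k, Continuous (F k) := fun k ↦ by fun_prop
  have hF_bound : ∀ k η, ‖F k η‖ ≤ 4 ^ β * |oneSubRpowCoeff β k| := fun k η ↦ by
    have hexp : ‖cexp (-I * n * η)‖ = 1 := by
      rw [Complex.norm_exp]; simp
    have hcos : ‖((Real.cos (η / 2) ^ 2 : ℝ) : ℂ) ^ k‖ ≤ 1 := by
      rw [norm_pow, Complex.norm_real, Real.norm_eq_abs, abs_of_nonneg (sq_nonneg _)]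
      exact pow_le_one₀ (sq_nonneg _) (by nlinarith [Real.cos_sq_le_one (η / 2)])
    calc ‖F k η‖ = 4 ^ β * |oneSubRpowCoeff β k| * (‖cexp (-I * n * η)‖ *
          ‖((Real.cos (η / 2) ^ 2 : ℝ) : ℂ) ^ k‖) := by
          rw [norm_mul, norm_mul, Complex.norm_real, Real.norm_eq_abs, abs_mul,
            abs_of_pos (by positivity : (0 : ℝ) < 4 ^ β)]
      _ ≤ 4 ^ β * |oneSubRpowCoeff β k| * (1 * 1) := by
          rw [hexp]
          gcongr
      _ = 4 ^ β * |oneSubRpowCoeff β k| := by ring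
  have hsum := intervalIntegral.hasSum_integral_of_dominated_convergence (a := -π) (b := π)
    (fun k _ ↦ 4 ^ β * |oneSubRpowCoeff β k|) (fun k ↦ (hF_cont k).aestronglyMeasurable)
    (fun k ↦ ae_of_all _ fun η _ ↦ hF_bound k η)
    (ae_of_all _ fun _ _ ↦ (summable_abs_oneSubRpowCoeff (by linarith) (by linarith)).mul_left _)
    intervalIntegrable_const
    (f := fun η ↦ cexp (-I * n * η) * (((4 * Real.sin (η / 2) ^ 2) ^ β : ℝ) : ℂ))
    (by
      -- at `η = 0` we have `cos²(η/2) = 1`, on the boundary of the disc of convergence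
      filter_upwards [Measure.ae_ne volume 0] with η hη0 hη
      rw [Set.uIoc_of_le (by linarith [pi_pos])] at hη
      have h := Complex.hasSum_ofReal.mpr
        (hasSum_rpow_four_mul_sin_half_sq β (sin_half_ne_zero hη hη0))
      refine (h.mul_left (cexp (-I * n * η))).congr_fun fun k ↦ ?_
      simp only [F]
      push_cast
      ring)
  have hπ : (π : ℂ) ≠ 0 := Complex.ofReal_ne_zero.mpr pi_ne_zero
  refine (hsum.const_smul (1 / (2 * π))).congr_fun fun k ↦ ?_
  simp only [F, intervalIntegral.integral_const_mul, integral_exp_mul_cos_half_sq_pow,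
    Complex.real_smul]
  push_cast
  field_simp

lemma aWeightC_neg (α : ℝ) (n : ℤ) : aWeightC α (-n) = aWeightC α n := by
  unfold aWeightC
  rw [integral_exp_mul_neg_int_of_even fun η ↦ by rw [neg_div, Real.sin_neg, neg_sq]]

lemma aWeightC_zero (α : ℝ) :
    aWeightC α 0 =
      ((1 / (2 * π) * ∫ η in -π..π, (4 * Real.sin (η / 2) ^ 2) ^ (α / 2) : ℝ) : ℂ) := by
  simp [aWeightC, intervalIntegral.integral_ofReal, Complex.real_smul]

lemma integral_rpow_four_mul_sin_half_sq_pos {β : ℝ} (hβ : 0 < β) :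
    0 < ∫ η in -π..π, (4 * Real.sin (η / 2) ^ 2) ^ β := by
  refine intervalIntegral.integral_pos (by linarith [pi_pos])
    (Continuous.continuousOn (by fun_prop (disch := exact hβ.le))) (fun η _ ↦ by positivity)
    ⟨π, ?_, ?_⟩
  · exact ⟨by linarith [pi_pos], le_rfl⟩
  · rw [Real.sin_pi_div_two]
    positivity

theorem exists_aWeightC_eq_ofReal_neg {α : ℝ} (hα0 : 0 < α) (hα2 : α < 2) {n : ℤ}
    (hn : n ≠ 0) :
    ∃ x : ℝ, aWeightC α n = x ∧ x < 0 := by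
  have hβ0 : 0 < α / 2 := by linarith
  have hβ1 : α / 2 < 1 := by linarith
  set w : ℕ → ℝ := fun k ↦
    4 ^ (α / 2) * oneSubRpowCoeff (α / 2) k * 4⁻¹ ^ k * (2 * k).choose (k + n.natAbs)
  have hw : HasSum w (∑' k, w k) :=
    (Complex.summable_ofReal.mp (hasSum_aWeightC hα0 hα2 n).summable).hasSum
  refine ⟨∑' k, w k, (hasSum_aWeightC hα0 hα2 n).unique (Complex.hasSum_ofReal.mpr hw), ?_⟩
  have hw_nonpos : w ≤ 0 := by
    rintro (_ | k)
    · simp [w, Nat.choose_eq_zero_of_lt (Int.natAbs_pos.mpr hn)]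
    · have hc := oneSubRpowCoeff_succ_neg hβ0 hβ1 k
      exact mul_nonpos_of_nonpos_of_nonneg
        (mul_nonpos_of_nonpos_of_nonneg (mul_nonpos_of_nonneg_of_nonpos (by positivity) hc.le)
          (by positivity)) (by positivity)
  have hw_natAbs : w n.natAbs < 0 := by
    obtain ⟨k, hk⟩ := Nat.exists_eq_add_one.mpr (Int.natAbs_pos.mpr hn)
    simp only [w, hk, ← two_mul, Nat.choose_self, Nat.cast_one, mul_one]
    exact mul_neg_of_neg_of_pos
      (mul_neg_of_pos_of_neg (by positivity) (oneSubRpowCoeff_succ_neg hβ0 hβ1 k)) (by positivity)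
  exact hasSum_lt hw_nonpos hw_natAbs hw hasSum_zero

/-- Sign properties of the weights: `a_0^{(α)} > 0`, `a_n^{(α)} = a_{-n}^{(α)}`, and
`a_n^{(α)} < 0` for `n ≠ 0` (the weights being real numbers). -/
theorem stmt10 (α : ℝ) (hα0 : 0 < α) (hα2 : α < 2) :
    (∃ x : ℝ, aWeightC α 0 = (x : ℂ) ∧ 0 < x) ∧
    (∀ n : ℤ, aWeightC α n = aWeightC α (-n)) ∧
    (∀ n : ℤ, n ≠ 0 → ∃ x : ℝ, aWeightC α n = (x : ℂ) ∧ x < 0) :=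
  ⟨⟨_, aWeightC_zero α,
      mul_pos (by positivity) (integral_rpow_four_mul_sin_half_sq_pos (by linarith))⟩,
    fun n ↦ (aWeightC_neg α n).symm, fun _ hn ↦ exists_aWeightC_eq_ofReal_neg hα0 hα2 hn⟩
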